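/- For matrices X, Y ∈ M_n(ℂ), if X + Y = W|X+Y| is a polar decomposition with W unitary, then |X+Y| ≤ (|X| + |Y| + W*(|X*| + |Y*|)W)/2 in the Loewner order. -/

import Mathlib

/-!
Factor `X = |X*|^{1/2} R` with `R*R = |X|`, taking `R = G X` for `G` the pseudo-inverse of
`|X*|^{1/2}`. Expanding `0 ≤ (R - |X*|^{1/2} W)*(R - |X*|^{1/2} W)` gives
`X*W + W*X ≤ |X| + W*|X*|W` for every `W`. Add this to the same inequality for `Y`: for the
unitary polar factor, `W*(X+Y) = (X+Y)*W = |X+Y|`, so the left-hand sides sum to `2|X+Y|`.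
-/

open Matrix
open scoped ComplexOrder

/-- The absolute value `|X| = (X* X)^{1/2}` of a complex matrix. -/
noncomputable def matAbs {n : ℕ} (X : Matrix (Fin n) (Fin n) ℂ) : Matrix (Fin n) (Fin n) ℂ :=
  ((Matrix.posSemidef_conjTranspose_mul_self X).1.eigenvectorUnitary : Matrix (Fin n) (Fin n) ℂ) *
    diagonal (((↑) : ℝ → ℂ) ∘ (√·) ∘ (Matrix.posSemidef_conjTranspose_mul_self X).1.eigenvalues) *
    (star (Matrix.posSemidef_conjTranspose_mul_self X).1.eigenvectorUnitary : Matrix (Fin n) (Fin n) ℂ)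

theorem star_mul_add_star_mul_le {A : Type*} [Ring A] [StarRing A] [PartialOrder A]
    [StarOrderedRing A] {x q r : A} (hq : IsSelfAdjoint q) (hx : q * r = x) (w : A) :
    star x * w + star w * x ≤ star r * r + star w * (q * q) * w := by
  have hsq : star (r - q * w) * (r - q * w) =
      star r * r + star w * (q * q) * w - (star x * w + star w * x) := by
    rw [← hx, star_sub, star_mul, star_mul, hq.star_eq]
    noncomm_ring
  rw [← sub_nonneg, ← hsq]
  exact star_mul_self_nonneg _

open scoped MatrixOrder

namespace Matrix

variable {𝕜 n : Type*} [RCLike 𝕜] [Fintype n] [DecidableEq n]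

theorem cfc_mul_real (f g : ℝ → ℝ) (A : Matrix n n 𝕜) :
    cfc (fun x ↦ f x * g x) A = cfc f A * cfc g A :=
  cfc_mul f g A ((Set.toFinite _).continuousOn f) ((Set.toFinite _).continuousOn g)

theorem cfc_self_mul_conjTranspose_mul_of_eqOn (X : Matrix n n 𝕜) {f : ℝ → ℝ}
    (hf : Set.EqOn f 1 (Set.Ioi 0)) : cfc f (X * Xᴴ) * X = X := by
  set H := X * Xᴴ
  set P := cfc f H
  have hH : 0 ≤ H := (posSemidef_self_mul_conjTranspose X).nonneg
  have hPH : P * H = H := by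
    conv_lhs => rw [← cfc_id' ℝ H]
    rw [← cfc_mul_real]
    conv_rhs => rw [← cfc_id' ℝ H]
    refine cfc_congr fun t ht ↦ ?_
    rcases (spectrum_nonneg_of_nonneg hH ht).eq_or_lt with rfl | ht'
    · simp
    · simp [hf ht']
  have hP : Pᴴ = P := (cfc_predicate f H : IsSelfAdjoint P).star_eq
  have hHP : H * P = H := by
    simpa [H, hP, mul_assoc] using congrArg conjTranspose hPH
  have hzero : (X - P * X) * (X - P * X)ᴴ = 0 := by
    rw [conjTranspose_sub, conjTranspose_mul, hP]
    calc (X - P * X) * (Xᴴ - Xᴴ * P) = H - P * H - H * P + P * H * P := by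
          simp only [H]; noncomm_ring
      _ = 0 := by rw [hPH, hHP]; abel
  exact (sub_eq_zero.mp (self_mul_conjTranspose_eq_zero.mp hzero)).symm

theorem exists_sqrt_abs_conjTranspose_mul_eq (X : Matrix n n 𝕜) :
    ∃ R, CFC.sqrt (CFC.abs Xᴴ) * R = X ∧ Rᴴ * R = CFC.abs X := by
  set H := X * Xᴴ
  have hH : 0 ≤ H := (posSemidef_self_mul_conjTranspose X).nonneg
  -- `Q = H ^ (1/4) = |Xᴴ| ^ (1/2)`, and `G` is its pseudo-inverse (`0⁻¹ = 0` in `ℝ`).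
  set s : ℝ → ℝ := fun t ↦ √√t
  set Q := cfc s H
  set G := cfc (fun t ↦ (s t)⁻¹) H
  have hs : ∀ t, 0 < t → 0 < s t := fun t ht ↦ by positivity
  have hQ : CFC.sqrt (CFC.abs Xᴴ) = Q := by
    have hQQ : Q * Q * (Q * Q) = H := by
      rw [← cfc_mul_real, ← cfc_mul_real]
      conv_rhs => rw [← cfc_id' ℝ H]
      refine cfc_congr fun t ht ↦ ?_
      rw [Real.mul_self_sqrt (Real.sqrt_nonneg _),
        Real.mul_self_sqrt (spectrum_nonneg_of_nonneg hH ht)]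
    have hQ0 : 0 ≤ Q := cfc_nonneg fun t _ ↦ Real.sqrt_nonneg _
    have hQQ0 : 0 ≤ Q * Q := by
      rw [← cfc_mul_real]
      exact cfc_nonneg fun t _ ↦ mul_self_nonneg _
    rw [CFC.abs, star_eq_conjTranspose, conjTranspose_conjTranspose,
      CFC.sqrt_unique hQQ, CFC.sqrt_unique rfl]
  refine ⟨G * X, ?_, ?_⟩
  · rw [hQ, ← mul_assoc, ← cfc_mul_real]
    exact cfc_self_mul_conjTranspose_mul_of_eqOn X fun t ht ↦ mul_inv_cancel₀ (hs t ht).ne'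
  · have hG : Gᴴ = G := (cfc_predicate _ H : IsSelfAdjoint G).star_eq
    have hGGHGG : G * G * H * (G * G) =
        cfc (fun t ↦ (s t)⁻¹ * (s t)⁻¹ * t * ((s t)⁻¹ * (s t)⁻¹)) H := by
      rw [cfc_mul_real, cfc_mul_real, cfc_mul_real, cfc_id' ℝ H]
    have hP : Set.EqOn (fun t ↦ (s t)⁻¹ * (s t)⁻¹ * t * ((s t)⁻¹ * (s t)⁻¹)) 1 (Set.Ioi 0) := by
      intro t ht
      have ht4 : t = s t * s t * (s t * s t) := by
        rw [Real.mul_self_sqrt (Real.sqrt_nonneg _), Real.mul_self_sqrt ht.le]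
      have hst := (hs t ht).ne'
      show (s t)⁻¹ * (s t)⁻¹ * t * ((s t)⁻¹ * (s t)⁻¹) = 1
      generalize s t = u at ht4 hst ⊢
      subst ht4
      field_simp
    refine (CFC.sqrt_unique ?_ (star_mul_self_nonneg (G * X))).symm
    calc (G * X)ᴴ * (G * X) * ((G * X)ᴴ * (G * X)) = Xᴴ * (G * G * H * (G * G) * X) := by
          simp only [conjTranspose_mul, hG, H]; noncomm_ring
      _ = star X * X := by rw [hGGHGG, cfc_self_mul_conjTranspose_mul_of_eqOn X hP]; rfl

theorem conjTranspose_mul_add_conjTranspose_mul_le_abs (X W : Matrix n n 𝕜) :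
    Xᴴ * W + Wᴴ * X ≤ CFC.abs X + Wᴴ * CFC.abs Xᴴ * W := by
  obtain ⟨R, hRX, hRR⟩ := exists_sqrt_abs_conjTranspose_mul_eq X
  have h := star_mul_add_star_mul_le (CFC.sqrt_nonneg (CFC.abs Xᴴ)).isSelfAdjoint hRX W
  simpa only [CFC.sqrt_mul_sqrt_self _ (CFC.abs_nonneg _), star_eq_conjTranspose, hRR] using h

end Matrix

theorem matAbs_eq_abs {n : ℕ} (X : Matrix (Fin n) (Fin n) ℂ) : matAbs X = CFC.abs X := by
  have hX : 0 ≤ Xᴴ * X := (posSemidef_conjTranspose_mul_self X).nonneg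
  rw [CFC.abs, star_eq_conjTranspose, CFC.sqrt_eq_real_sqrt _ hX, cfcₙ_eq_cfc,
    (posSemidef_conjTranspose_mul_self X).1.cfc_eq, IsHermitian.cfc, Unitary.conjStarAlgAut_apply]
  rfl

/-- If `X + Y = W|X+Y|` with `W` unitary, then
`|X+Y| ≤ (|X| + |Y| + W*(|X*| + |Y*|)W)/2` in the Loewner order. -/
theorem stmt5 {n : ℕ} (X Y W : Matrix (Fin n) (Fin n) ℂ)
    (hW : W ∈ Matrix.unitaryGroup (Fin n) ℂ)
    (hpolar : X + Y = W * matAbs (X + Y)) :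
    ((1 / 2 : ℂ) • (matAbs X + matAbs Y + star W * (matAbs Xᴴ + matAbs Yᴴ) * W)
      - matAbs (X + Y)).PosSemidef := by
  simp only [matAbs_eq_abs, star_eq_conjTranspose] at hpolar ⊢
  set A := CFC.abs (X + Y)
  set S := CFC.abs X + CFC.abs Y + Wᴴ * (CFC.abs Xᴴ + CFC.abs Yᴴ) * W
  have hWW : Wᴴ * W = 1 := Unitary.star_mul_self_of_mem hW
  have hA : Aᴴ = A := (CFC.abs_nonneg (X + Y)).isSelfAdjoint.star_eq
  have hWA : Wᴴ * (X + Y) = A := by rw [hpolar, ← mul_assoc, hWW, one_mul]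
  have hAW : (X + Y)ᴴ * W = A := by rw [hpolar, conjTranspose_mul, hA, mul_assoc, hWW, mul_one]
  have h2A : A + A ≤ S :=
    calc A + A = (X + Y)ᴴ * W + Wᴴ * (X + Y) := by rw [hWA, hAW]
      _ = (Xᴴ * W + Wᴴ * X) + (Yᴴ * W + Wᴴ * Y) := by rw [conjTranspose_add]; noncomm_ring
      _ ≤ (CFC.abs X + Wᴴ * CFC.abs Xᴴ * W) + (CFC.abs Y + Wᴴ * CFC.abs Yᴴ * W) :=
          add_le_add (conjTranspose_mul_add_conjTranspose_mul_le_abs X W)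
            (conjTranspose_mul_add_conjTranspose_mul_le_abs Y W)
      _ = S := by simp only [S]; noncomm_ring
  have hhalf : (1 / 2 : ℂ) • S - A = (1 / 2 : ℂ) • (S - (A + A)) := by
    rw [smul_sub, ← two_smul ℂ A, smul_smul]
    norm_num
  rw [hhalf]
  exact (le_iff.mp h2A).smul (by norm_num [Complex.le_def])
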